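/- arXiv:1003.0579 — 4 statements merged into one kernel-verified Lean document; each statement's English description precedes it below -/
import Mathlib

section
/- Fix n ≥ 1, weights b_1,...,b_n ∈ (0,1), and r' > 1 with ∑_{i=1}^n b_i^{r'} = 1, and let r satisfy 1/r + 1/r' = 1. Let the Tsirelson-type norm ‖·‖ on c_00 be defined as the supremum of ⟨f, x⟩ over f in the norming set W[(A_n, b̄)]. Then for every x ∈ c_00, ‖x‖ ≤ ‖x‖_{ℓ_r}. -/
/-- The norming set `W[(𝒜_n, b̄)]` of the Tsirelson-type space `T(𝒜_n, b̄)`. -/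
inductive IsW (n : ℕ) (b : Fin n → ℝ) : (ℕ →₀ ℝ) → Prop
  | unit (k : ℕ) (ε : ℝ) (hε : ε = 1 ∨ ε = -1) : IsW n b (Finsupp.single k ε)
  | combine (a : ℕ) (ha : 1 ≤ a) (han : a ≤ n) (f : Fin a → (ℕ →₀ ℝ))
      (hf : ∀ i, IsW n b (f i))
      (hsucc : ∀ i j : Fin a, i < j → ∀ p ∈ (f i).support, ∀ q ∈ (f j).support, p < q) :
      IsW n b (∑ i : Fin a, b (Fin.castLE han i) • f i)

/-- The Tsirelson-type norm: `‖x‖ = sup { ⟨f, x⟩ : f ∈ W[(𝒜_n, b̄)] }`. -/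
noncomputable def tnorm (n : ℕ) (b : Fin n → ℝ) (x : ℕ →₀ ℝ) : ℝ :=
  sSup {y | ∃ f : ℕ →₀ ℝ, IsW n b f ∧ y = f.sum fun k c => c * x k}

/-!
Every `f ∈ W` satisfies `⟨f, x⟩ ≤ ‖x|_{supp f}‖_{ℓ_r}`, by induction on `W`. For
`f = ∑ bᵢ fᵢ` the supports of the `fᵢ` are disjoint, so Hölder's inequality with
`∑ bᵢ^{r'} ≤ 1` gives `⟨f, x⟩ ≤ ∑ bᵢ ‖x|_{supp fᵢ}‖_r ≤ (∑ ‖x|_{supp fᵢ}‖_r^r)^{1/r} = ‖x|_{supp f}‖_r`.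
-/

open Finset Function

theorem Fin.sum_castLE_le {M : Type*} [AddCommMonoid M] [PartialOrder M] [IsOrderedAddMonoid M]
    {a n : ℕ} (h : a ≤ n) {g : Fin n → M} (hg : ∀ i, 0 ≤ g i) :
    ∑ i : Fin a, g (Fin.castLE h i) ≤ ∑ i, g i := by
  simpa only [sum_map, Fin.castLEEmb_apply] using
    sum_le_univ_sum_of_nonneg (s := univ.map (Fin.castLEEmb h)) hg

theorem Real.inner_le_Lq_of_sum_rpow_le_one {ι : Type*} (s : Finset ι) {p q : ℝ}
    (hpq : p.HolderConjugate q) {c g : ι → ℝ} (hc : ∀ i ∈ s, 0 ≤ c i) (hg : ∀ i ∈ s, 0 ≤ g i)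
    (hc1 : ∑ i ∈ s, c i ^ p ≤ 1) :
    ∑ i ∈ s, c i * g i ≤ (∑ i ∈ s, g i ^ q) ^ (1 / q) := by
  have hcp : (∑ i ∈ s, c i ^ p) ^ (1 / p) ≤ 1 :=
    Real.rpow_le_one (sum_nonneg fun i hi => Real.rpow_nonneg (hc i hi) p) hc1
      hpq.one_div_nonneg
  calc ∑ i ∈ s, c i * g i
      ≤ (∑ i ∈ s, c i ^ p) ^ (1 / p) * (∑ i ∈ s, g i ^ q) ^ (1 / q) :=
        Real.inner_le_Lp_mul_Lq_of_nonneg s hpq hc hg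
    _ ≤ (∑ i ∈ s, g i ^ q) ^ (1 / q) :=
        mul_le_of_le_one_left
          (Real.rpow_nonneg (sum_nonneg fun i hi => Real.rpow_nonneg (hg i hi) q) _) hcp

theorem Finsupp.sum_sum_smul_mul {ι : Type*} (s : Finset ι) (c : ι → ℝ) (f : ι → ℕ →₀ ℝ)
    (x : ℕ → ℝ) :
    ((∑ i ∈ s, c i • f i).sum fun k v => v * x k) = ∑ i ∈ s, c i * (f i).sum fun k v => v * x k := by
  have := map_sum (Finsupp.linearCombination ℝ x) (fun i => c i • f i) s
  simp only [map_smul, Finsupp.linearCombination_apply, smul_eq_mul] at this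
  exact this

theorem Finsupp.sum_support_sum_smul {ι α : Type*} [DecidableEq α] (s : Finset ι)
    {c : ι → ℝ} (hc : ∀ i, c i ≠ 0) {f : ι → α →₀ ℝ}
    (hf : Pairwise (Disjoint on fun i => (f i).support)) (g : α → ℝ) :
    ∑ k ∈ (∑ i ∈ s, c i • f i).support, g k = ∑ i ∈ s, ∑ k ∈ (f i).support, g k := by
  have hsupp : ∀ i, (c i • f i).support = (f i).support := fun i =>
    Finsupp.support_smul_eq (hc i)
  rw [Finsupp.support_sum_eq_biUnion s fun i j hij => by simpa only [hsupp] using hf hij,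
    sum_biUnion fun i _ j _ hij => by simpa only [hsupp] using hf hij]
  simp only [hsupp]

theorem pairwise_disjoint_support_of_successive {a : ℕ} {f : Fin a → ℕ →₀ ℝ}
    (hsucc : ∀ i j : Fin a, i < j → ∀ p ∈ (f i).support, ∀ q ∈ (f j).support, p < q) :
    Pairwise (Disjoint on fun i => (f i).support) := by
  intro i j hij
  refine disjoint_left.2 fun p hpi hpj => ?_
  rcases hij.lt_or_gt with h | h
  · exact lt_irrefl p (hsucc i j h p hpi p hpj)
  · exact lt_irrefl p (hsucc j i h p hpj p hpi)

theorem sum_abs_rpow_le_finsupp_sum (x : ℕ →₀ ℝ) (s : Finset ℕ) {r : ℝ} (hr : r ≠ 0) :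
    ∑ k ∈ s, |x k| ^ r ≤ x.sum fun _ c => |c| ^ r :=
  calc ∑ k ∈ s, |x k| ^ r
      ≤ ∑ k ∈ s ∪ x.support, |x k| ^ r :=
        sum_le_sum_of_subset_of_nonneg subset_union_left fun k _ _ => by positivity
    _ = ∑ k ∈ x.support, |x k| ^ r :=
        (sum_subset subset_union_right fun k _ hk => by
          simp [Finsupp.notMem_support_iff.1 hk, Real.zero_rpow hr]).symm

theorem IsW.sum_mul_le_rpow_sum_support {n : ℕ} {b : Fin n → ℝ} (hb : ∀ i, 0 < b i) {r r' : ℝ}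
    (hrr' : r'.HolderConjugate r) (hsum : ∑ i, b i ^ r' ≤ 1) (x : ℕ →₀ ℝ) {f : ℕ →₀ ℝ}
    (hf : IsW n b f) :
    (f.sum fun k c => c * x k) ≤ (∑ k ∈ f.support, |x k| ^ r) ^ (1 / r) := by
  have hr : r ≠ 0 := hrr'.symm.ne_zero
  induction hf with
  | unit k ε hε =>
    have hε0 : ε ≠ 0 := by rcases hε with rfl | rfl <;> norm_num
    rw [Finsupp.sum_single_index (zero_mul _), Finsupp.support_single k hε0,
      sum_singleton, one_div, Real.rpow_rpow_inv (abs_nonneg _) hr]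
    calc ε * x k ≤ |ε * x k| := le_abs_self _
      _ = |x k| := by rcases hε with rfl | rfl <;> simp
  | combine a _ han f _ hsucc ih =>
    set S : Fin a → ℝ := fun i => (∑ k ∈ (f i).support, |x k| ^ r) ^ (1 / r)
    have hsum_nonneg : ∀ i, 0 ≤ ∑ k ∈ (f i).support, |x k| ^ r := fun i =>
      sum_nonneg fun k _ => by positivity
    calc ((∑ i, b (Fin.castLE han i) • f i).sum fun k c => c * x k)
        = ∑ i, b (Fin.castLE han i) * (f i).sum fun k c => c * x k :=
          Finsupp.sum_sum_smul_mul _ _ _ _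
      _ ≤ ∑ i, b (Fin.castLE han i) * S i :=
          sum_le_sum fun i _ => mul_le_mul_of_nonneg_left (ih i) (hb _).le
      _ ≤ (∑ i, S i ^ r) ^ (1 / r) :=
          Real.inner_le_Lq_of_sum_rpow_le_one _ hrr' (fun i _ => (hb _).le)
            (fun i _ => Real.rpow_nonneg (hsum_nonneg i) _)
            ((Fin.sum_castLE_le han fun i => Real.rpow_nonneg (hb i).le r').trans hsum)
      _ = (∑ k ∈ (∑ i, b (Fin.castLE han i) • f i).support, |x k| ^ r) ^ (1 / r) := by
          rw [Finsupp.sum_support_sum_smul _ (fun i => (hb _).ne')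
            (pairwise_disjoint_support_of_successive hsucc)]
          simp only [S, one_div, Real.rpow_inv_rpow (hsum_nonneg _) hr]

theorem stmt_3_general (n : ℕ) (b : Fin n → ℝ) (hb : ∀ i, 0 < b i ∧ b i < 1)
    (r r' : ℝ) (hr' : 1 < r') (hrr' : 1 / r + 1 / r' = 1)
    (hsum : ∑ i, b i ^ r' = 1)
    (x : ℕ →₀ ℝ) :
    tnorm n b x ≤ (x.sum fun _ c => |c| ^ r) ^ (1 / r) := by
  have hconj : r'.HolderConjugate r :=
    Real.holderConjugate_iff.2 ⟨hr', by simpa only [one_div, add_comm] using hrr'⟩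
  have hr : 0 < r := hconj.symm.pos
  refine Real.sSup_le ?_ (Real.rpow_nonneg (Finsupp.sum_nonneg fun _ _ => by positivity) _)
  rintro _ ⟨f, hf, rfl⟩
  calc (f.sum fun k c => c * x k)
      ≤ (∑ k ∈ f.support, |x k| ^ r) ^ (1 / r) :=
        hf.sum_mul_le_rpow_sum_support (fun i => (hb i).1) hconj hsum.le x
    _ ≤ (x.sum fun _ c => |c| ^ r) ^ (1 / r) :=
        Real.rpow_le_rpow (sum_nonneg fun _ _ => by positivity)
          (sum_abs_rpow_le_finsupp_sum x _ hr.ne') (one_div_nonneg.2 hr.le)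

/-- The Tsirelson-type norm is dominated by the `ℓ_r` norm:
for every finitely supported `x`, `‖x‖ ≤ (∑_k |x k| ^ r) ^ (1/r)`. -/
theorem stmt_3 (n : ℕ) (hn : 1 ≤ n) (b : Fin n → ℝ) (hb : ∀ i, 0 < b i ∧ b i < 1)
    (r r' : ℝ) (hr' : 1 < r') (hrr' : 1 / r + 1 / r' = 1)
    (hsum : ∑ i, b i ^ r' = 1)
    (x : ℕ →₀ ℝ) :
    tnorm n b x ≤ (x.sum fun _ c => |c| ^ r) ^ (1 / r) :=
  stmt_3_general n b hb r r' hr' hrr' hsum x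
end

section
/- Fix n ≥ 1 and b_1,...,b_n ∈ (0,1). For each j ∈ ℕ, identify the set M_j = {1,...,n}^j with an interval of natural numbers of length n^j, and define f_j = ∑_{s ∈ M_j} (∏_{i=1}^j b_{s_i}) e_s*. Then f_j belongs to the norming set W[(A_n, b̄)], and the sum of its coefficients equals (∑_{i=1}^n b_i)^j. -/
/-- The identification of `M_j = {1,…,n}^j` with the interval `{0,…,n^j - 1}` of `ℕ`,
via the lexicographic (most-significant-digit-first) base-`n` enumeration. -/
def enc (n j : ℕ) (s : Fin j → Fin n) : ℕ :=
  ∑ i : Fin j, (s i : ℕ) * n ^ (j - 1 - (i : ℕ))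

/-!
Split `s ∈ M_{j+1}` into its first letter `k` and the tail `t ∈ M_j`: since `enc` is lexicographic,
`f_{j+1} = ∑_k b_k g_k`, where `g_k` is a copy of `f_j` translated into the `k`-th block of `n^j`
consecutive integers. The blocks are successive, so `f_j ∈ W` follows by induction on `j` once the
statement is generalised to translates of `f_j`. The coefficient sum is the expansion of
`(∑ b_i)^j` over `M_j`.
-/

lemma enc_succ (n j : ℕ) (s : Fin (j + 1) → Fin n) :
    enc n (j + 1) s = (s 0 : ℕ) * n ^ j + enc n j (Fin.tail s) := by
  rw [enc, enc, Fin.sum_univ_succ]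
  congr 1
  refine Finset.sum_congr rfl fun i _ => ?_
  simp only [Fin.val_succ, Fin.tail]
  congr 2
  omega

lemma enc_lt_pow (n j : ℕ) (s : Fin j → Fin n) : enc n j s < n ^ j := by
  induction j with
  | zero => simp [enc]
  | succ j ih =>
    rw [enc_succ, pow_succ']
    have htail := ih (Fin.tail s)
    have hhead : (s 0 : ℕ) + 1 ≤ n := (s 0).2
    calc (s 0 : ℕ) * n ^ j + enc n j (Fin.tail s)
        < ((s 0 : ℕ) + 1) * n ^ j := by nlinarith
      _ ≤ n * n ^ j := Nat.mul_le_mul_right _ hhead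

noncomputable def shiftedProdFunctional (n : ℕ) (b : Fin n → ℝ) (j m : ℕ) : ℕ →₀ ℝ :=
  ∑ s : Fin j → Fin n, (∏ i, b (s i)) • Finsupp.single (m + enc n j s) (1 : ℝ)

lemma support_shiftedProdFunctional_subset (n : ℕ) (b : Fin n → ℝ) (j m : ℕ) :
    (shiftedProdFunctional n b j m).support ⊆ Finset.Ico m (m + n ^ j) := by
  classical
  refine Finsupp.support_finsetSum.trans fun p hp => ?_
  obtain ⟨s, -, hs⟩ := Finset.mem_biUnion.mp hp
  have hp : p = m + enc n j s := by
    simpa [Finsupp.support_single] using Finsupp.support_smul hs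
  have := enc_lt_pow n j s
  rw [Finset.mem_Ico]
  omega

lemma shiftedProdFunctional_zero (n : ℕ) (b : Fin n → ℝ) (m : ℕ) :
    shiftedProdFunctional n b 0 m = Finsupp.single m 1 := by
  simp [shiftedProdFunctional, enc]

lemma shiftedProdFunctional_succ (n : ℕ) (b : Fin n → ℝ) (j m : ℕ) :
    shiftedProdFunctional n b (j + 1) m =
      ∑ k : Fin n, b k • shiftedProdFunctional n b j (m + k * n ^ j) := by
  rw [shiftedProdFunctional, ← (Fin.consEquiv fun _ => Fin n).sum_comp, Fintype.sum_prod_type]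
  refine Finset.sum_congr rfl fun k _ => ?_
  rw [shiftedProdFunctional, Finset.smul_sum]
  refine Finset.sum_congr rfl fun t _ => ?_
  simp only [Fin.consEquiv_apply, enc_succ, Fin.prod_univ_succ, Fin.cons_zero, Fin.cons_succ,
    smul_smul, add_assoc]
  rfl

lemma isW_shiftedProdFunctional (n : ℕ) (hn : 1 ≤ n) (b : Fin n → ℝ) (j m : ℕ) :
    IsW n b (shiftedProdFunctional n b j m) := by
  induction j generalizing m with
  | zero =>
    rw [shiftedProdFunctional_zero]
    exact IsW.unit m 1 (Or.inl rfl)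
  | succ j ih =>
    have hcomb := IsW.combine n hn le_rfl (fun k => shiftedProdFunctional n b j (m + k * n ^ j))
      (fun k => ih _) fun k l hkl p hp q hq => by
        have hp' := Finset.mem_Ico.mp (support_shiftedProdFunctional_subset n b j _ hp)
        have hq' := Finset.mem_Ico.mp (support_shiftedProdFunctional_subset n b j _ hq)
        have hblock : ((k : ℕ) + 1) * n ^ j ≤ l * n ^ j := Nat.mul_le_mul_right _ hkl
        nlinarith
    simpa only [Fin.castLE_refl, ← shiftedProdFunctional_succ] using hcomb

lemma sum_coeffs_sum_smul_single {ι α : Type*} (S : Finset ι) (c : ι → ℝ) (g : ι → α) :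
    ((∑ s ∈ S, c s • Finsupp.single (g s) (1 : ℝ)).sum fun _ x => x) = ∑ s ∈ S, c s := by
  rw [← Finsupp.sum_finsetSum_index (fun _ => rfl) fun _ _ _ => rfl]
  simp

theorem stmt_5_general (n : ℕ) (hn : 1 ≤ n) (b : Fin n → ℝ) (j : ℕ) :
    IsW n b (∑ s : Fin j → Fin n, (∏ i, b (s i)) • Finsupp.single (enc n j s) (1 : ℝ)) ∧
    ((∑ s : Fin j → Fin n, (∏ i, b (s i)) • Finsupp.single (enc n j s) (1 : ℝ)).sum
        fun _ c => c) = (∑ i, b i) ^ j := by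
  refine ⟨?_, ?_⟩
  · simpa [shiftedProdFunctional] using isW_shiftedProdFunctional n hn b j 0
  · rw [sum_coeffs_sum_smul_single, Fintype.sum_pow]

/-- the functional `f_j = ∑_{s ∈ M_j} (∏_{i=1}^j b_{s_i}) e_s*` belongs to the
norming set `W[(𝒜_n, b̄)]`, and the sum of its coefficients equals `(∑_{i=1}^n b_i)^j`. -/
theorem stmt_5 (n : ℕ) (hn : 1 ≤ n) (b : Fin n → ℝ) (hb : ∀ i, 0 < b i ∧ b i < 1) (j : ℕ) :
    IsW n b (∑ s : Fin j → Fin n, (∏ i, b (s i)) • Finsupp.single (enc n j s) (1 : ℝ)) ∧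
    ((∑ s : Fin j → Fin n, (∏ i, b (s i)) • Finsupp.single (enc n j s) (1 : ℝ)).sum
        fun _ c => c) = (∑ i, b i) ^ j :=
  stmt_5_general n hn b j
end

section
/- Let C ≥ 1 and suppose (i_{q,m}) is a system of linear maps i_{q,m} : ℓ^∞(Γ_q) → ℓ^∞(Γ_m) (for q ≤ m, Γ_q finite increasing sets) satisfying i_{q,m} = i_{l,m} ∘ i_{q,l} for q ≤ l ≤ m and ‖i_{q,m}‖ ≤ C for all q ≤ m, with each i_{q,m} extending the identity on coordinates in Γ_q. Define projections P_{(p,q]} : X → X on the space X generated by the images by P_{(p,q]}(x) = i_q(r_q(x)) − i_p(r_p(x)), where r_q is restriction to Γ_q and i_q is the direct limit map. Then ‖P_{(p,q]}‖ ≤ 2C, and the finite-dimensional spaces M_q = i_q[ℓ^∞(Δ_q)] (where Δ_q = Γ_q \ Γ_{q−1}) form a finite-dimensional decomposition of X. -/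
/-!
The operators `P_q x = I_q (r_q x)` are uniformly bounded by `C`, since `r_q` has norm one and
each coordinate of `I_q y` is a coordinate of some `i_{q,m} y`. Compatibility of the system makes
`P_q` fix `I_p[ℓ^∞(Γ_p)]` for `q ≥ p`, so `P_q x → x` on the dense union of these ranges, and
equicontinuity of the family `(P_q)` carries the convergence over to its closure. Finally
`P_{q+1} x - P_q x = I_{q+1} (r_{q+1} x - i_{q,q+1} (r_q x))`, and the argument vanishes on `Γ_q`
because `i_{q,q+1}` extends the identity there.
-/

open Filter Topology

theorem tendsto_of_mem_closure_of_norm_le {ι E F : Type*} [SeminormedAddCommGroup E]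
    [FunLike F E E] [AddMonoidHomClass F E E] {l : Filter ι} (P : ι → F) (C : ℝ)
    (hP : ∀ n x, ‖P n x‖ ≤ C * ‖x‖) {S : Set E} (hS : ∀ z ∈ S, Tendsto (P · z) l (𝓝 z))
    {x : E} (hx : x ∈ closure S) : Tendsto (P · x) l (𝓝 x) := by
  have hequi : Equicontinuous fun n => (P n : E → E) :=
    (LipschitzWith.uniformEquicontinuous _ _ fun n =>
      AddMonoidHomClass.lipschitz_of_bound (P n) C (hP n)).equicontinuous
  exact closure_minimal hS (hequi.isClosed_setOfPred_tendsto continuous_id) hx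

section DirectLimit

variable {Γ : Type*}

def lpRestrict (s : Finset Γ) : lp (fun _ : Γ => ℝ) ⊤ →ₗ[ℝ] (s → ℝ) where
  toFun x γ := x γ
  map_add' _ _ := rfl
  map_smul' _ _ := rfl

theorem norm_lpRestrict_le (s : Finset Γ) (x : lp (fun _ : Γ => ℝ) ⊤) :
    ‖lpRestrict s x‖ ≤ ‖x‖ :=
  (pi_norm_le_iff_of_nonneg (norm_nonneg x)).2 fun γ =>
    lp.norm_apply_le_norm ENNReal.top_ne_zero x γ

variable {Γq : ℕ → Finset Γ} {i : ∀ q m, q ≤ m → ((Γq q → ℝ) →ₗ[ℝ] (Γq m → ℝ))}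
  {I : ∀ q, (Γq q → ℝ) →ₗ[ℝ] lp (fun _ : Γ => ℝ) ⊤}

theorem exists_ge_mem_of_monotone (hΓ : Monotone Γq) (hcover : ∀ γ : Γ, ∃ q, γ ∈ Γq q)
    (q : ℕ) (γ : Γ) : ∃ m, q ≤ m ∧ γ ∈ Γq m := by
  obtain ⟨m, hm⟩ := hcover γ
  exact ⟨max q m, le_max_left q m, hΓ (le_max_right q m) hm⟩

theorem norm_directLimit_le (hΓ : Monotone Γq) (hcover : ∀ γ : Γ, ∃ q, γ ∈ Γq q) {C : ℝ}
    (hC : 0 ≤ C) (hbound : ∀ q m (h : q ≤ m) (y : Γq q → ℝ), ‖i q m h y‖ ≤ C * ‖y‖)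
    (hI : ∀ q m (h : q ≤ m) (y : Γq q → ℝ) (γ : Γ) (hγ : γ ∈ Γq m),
      (I q y : ∀ _ : Γ, ℝ) γ = i q m h y ⟨γ, hγ⟩)
    (q : ℕ) (y : Γq q → ℝ) : ‖I q y‖ ≤ C * ‖y‖ := by
  refine lp.norm_le_of_forall_le (by positivity) fun γ => ?_
  obtain ⟨m, hqm, hγ⟩ := exists_ge_mem_of_monotone hΓ hcover q γ
  rw [hI q m hqm y γ hγ]
  exact (norm_le_pi_norm _ _).trans (hbound q m hqm y)

theorem directLimit_comp (hΓ : Monotone Γq) (hcover : ∀ γ : Γ, ∃ q, γ ∈ Γq q)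
    (hcomp : ∀ q l m (hql : q ≤ l) (hlm : l ≤ m) (y : Γq q → ℝ),
      i q m (hql.trans hlm) y = i l m hlm (i q l hql y))
    (hI : ∀ q m (h : q ≤ m) (y : Γq q → ℝ) (γ : Γ) (hγ : γ ∈ Γq m),
      (I q y : ∀ _ : Γ, ℝ) γ = i q m h y ⟨γ, hγ⟩)
    {p q : ℕ} (hpq : p ≤ q) (y : Γq p → ℝ) : I q (i p q hpq y) = I p y := by
  ext γ
  obtain ⟨m, hqm, hγ⟩ := exists_ge_mem_of_monotone hΓ hcover q γ
  rw [hI q m hqm _ γ hγ, hI p m (hpq.trans hqm) y γ hγ, hcomp p q m hpq hqm]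

theorem directLimit_lpRestrict_directLimit (hΓ : Monotone Γq)
    (hcover : ∀ γ : Γ, ∃ q, γ ∈ Γq q)
    (hcomp : ∀ q l m (hql : q ≤ l) (hlm : l ≤ m) (y : Γq q → ℝ),
      i q m (hql.trans hlm) y = i l m hlm (i q l hql y))
    (hI : ∀ q m (h : q ≤ m) (y : Γq q → ℝ) (γ : Γ) (hγ : γ ∈ Γq m),
      (I q y : ∀ _ : Γ, ℝ) γ = i q m h y ⟨γ, hγ⟩)
    {p q : ℕ} (hpq : p ≤ q) (y : Γq p → ℝ) : I q (lpRestrict (Γq q) (I p y)) = I p y := by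
  have hres : lpRestrict (Γq q) (I p y) = i p q hpq y := funext fun γ => hI p q hpq y γ γ.2
  rw [hres, directLimit_comp hΓ hcover hcomp hI]

theorem directLimit_succ_sub_mem_image (hΓ : Monotone Γq) (hcover : ∀ γ : Γ, ∃ q, γ ∈ Γq q)
    (hcomp : ∀ q l m (hql : q ≤ l) (hlm : l ≤ m) (y : Γq q → ℝ),
      i q m (hql.trans hlm) y = i l m hlm (i q l hql y))
    (hext : ∀ q m (h : q ≤ m) (y : Γq q → ℝ) (γ : Γ) (hγq : γ ∈ Γq q)
      (hγm : γ ∈ Γq m), i q m h y ⟨γ, hγm⟩ = y ⟨γ, hγq⟩)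
    (hI : ∀ q m (h : q ≤ m) (y : Γq q → ℝ) (γ : Γ) (hγ : γ ∈ Γq m),
      (I q y : ∀ _ : Γ, ℝ) γ = i q m h y ⟨γ, hγ⟩)
    (q : ℕ) (x : lp (fun _ : Γ => ℝ) ⊤) :
    I (q + 1) (lpRestrict (Γq (q + 1)) x) - I q (lpRestrict (Γq q) x)
      ∈ I (q + 1) '' {y | ∀ γ : Γq (q + 1), (γ : Γ) ∈ Γq q → y γ = 0} := by
  refine ⟨lpRestrict (Γq (q + 1)) x - i q (q + 1) q.le_succ (lpRestrict (Γq q) x), ?_, ?_⟩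
  · intro γ hγ
    simp only [Pi.sub_apply, hext q (q + 1) q.le_succ _ γ hγ γ.2, sub_eq_zero]
    rfl
  · rw [map_sub, directLimit_comp hΓ hcover hcomp hI]

end DirectLimit

theorem stmt_12_general (Γ : Type*) (Γq : ℕ → Finset Γ)
    (hmono : ∀ q, Γq q ⊂ Γq (q + 1))
    (hcover : ∀ γ : Γ, ∃ q, γ ∈ Γq q)
    (C : ℝ) (hC : 1 ≤ C)
    (i : ∀ q m, q ≤ m → (({γ // γ ∈ Γq q} → ℝ) →ₗ[ℝ] ({γ // γ ∈ Γq m} → ℝ)))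
    (hcomp : ∀ q l m (hql : q ≤ l) (hlm : l ≤ m) (y : {γ // γ ∈ Γq q} → ℝ),
      i q m (hql.trans hlm) y = i l m hlm (i q l hql y))
    (hext : ∀ q m (h : q ≤ m) (y : {γ // γ ∈ Γq q} → ℝ) (γ : Γ) (hγq : γ ∈ Γq q)
      (hγm : γ ∈ Γq m), i q m h y ⟨γ, hγm⟩ = y ⟨γ, hγq⟩)
    (hbound : ∀ q m (h : q ≤ m) (y : {γ // γ ∈ Γq q} → ℝ), ‖i q m h y‖ ≤ C * ‖y‖)
    (I : ∀ q, ({γ // γ ∈ Γq q} → ℝ) →ₗ[ℝ] lp (fun _ : Γ => ℝ) ⊤)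
    (hI : ∀ q m (h : q ≤ m) (y : {γ // γ ∈ Γq q} → ℝ) (γ : Γ) (hγ : γ ∈ Γq m),
      (I q y : ∀ _ : Γ, ℝ) γ = i q m h y ⟨γ, hγ⟩) :
    (∀ p q (_ : p ≤ q) (x : lp (fun _ : Γ => ℝ) ⊤),
      ‖I q (fun γ : {γ // γ ∈ Γq q} => x γ) - I p (fun γ : {γ // γ ∈ Γq p} => x γ)‖
        ≤ 2 * C * ‖x‖) ∧
    (∀ x ∈ closure (⋃ q, Set.range (I q)),
      Filter.Tendsto (fun q => I q (fun γ : {γ // γ ∈ Γq q} => x γ))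
        Filter.atTop (nhds x)) ∧
    (∀ x ∈ closure (⋃ q, Set.range (I q)), ∀ q : ℕ,
      (I (q + 1) (fun γ : {γ // γ ∈ Γq (q + 1)} => x γ)
          - I q (fun γ : {γ // γ ∈ Γq q} => x γ))
        ∈ (I (q + 1)) ''
          {y : {γ // γ ∈ Γq (q + 1)} → ℝ | ∀ γ : {γ // γ ∈ Γq (q + 1)}, (γ : Γ) ∈ Γq q → y γ = 0}) := by
  have hΓ : Monotone Γq := monotone_nat_of_le_succ fun q => (hmono q).subset
  have hP : ∀ q x, ‖(I q).comp (lpRestrict (Γq q)) x‖ ≤ C * ‖x‖ := fun q x =>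
    (norm_directLimit_le hΓ hcover (by linarith) hbound hI q _).trans
      (by gcongr; exact norm_lpRestrict_le _ x)
  refine ⟨fun p q _ x => ?_, fun x hx => ?_, fun x _ q => ?_⟩
  · calc _ ≤ C * ‖x‖ + C * ‖x‖ := norm_sub_le_of_le (hP q x) (hP p x)
      _ = 2 * C * ‖x‖ := by ring
  · refine tendsto_of_mem_closure_of_norm_le (fun q => (I q).comp (lpRestrict (Γq q))) C hP
      ?_ hx
    intro z hz
    obtain ⟨p, y, rfl⟩ := Set.mem_iUnion.1 hz
    refine tendsto_nhds_of_eventually_eq (eventually_atTop.2 ⟨p, fun q hpq => ?_⟩)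
    exact directLimit_lpRestrict_directLimit hΓ hcover hcomp hI hpq y
  · exact directLimit_succ_sub_mem_image hΓ hcover hcomp hext hI q x

/-- Bourgain–Delbaen setup, Proposition 2.1: given a compatible uniformly
`C`-bounded system of extension operators `i_{q,m} : ℓ^∞(Γ_q) → ℓ^∞(Γ_m)` extending the
identity on the coordinates of `Γ_q`, with direct limit maps `I_q : ℓ^∞(Γ_q) → ℓ^∞(Γ)`,
the projections `P_{(p,q]} x = I_q (r_q x) − I_p (r_p x)` have norm at most `2C`, and the
spaces `M_q = I_q[ℓ^∞(Δ_q)]` form a finite-dimensional decomposition of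
`X = closure (⋃_q I_q[ℓ^∞(Γ_q)])`: every `x ∈ X` is the limit of its partial sums
`I_q (r_q x)`, whose increments lie in the corresponding `M_{q+1}`. -/
theorem stmt_12 (Γ : Type*) (Γq : ℕ → Finset Γ)
    (hmono : ∀ q, Γq q ⊂ Γq (q + 1))
    (hcover : ∀ γ : Γ, ∃ q, γ ∈ Γq q)
    (C : ℝ) (hC : 1 ≤ C)
    (i : ∀ q m, q ≤ m → (({γ // γ ∈ Γq q} → ℝ) →ₗ[ℝ] ({γ // γ ∈ Γq m} → ℝ)))
    (hid : ∀ q (y : {γ // γ ∈ Γq q} → ℝ), i q q le_rfl y = y)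
    (hcomp : ∀ q l m (hql : q ≤ l) (hlm : l ≤ m) (y : {γ // γ ∈ Γq q} → ℝ),
      i q m (hql.trans hlm) y = i l m hlm (i q l hql y))
    (hext : ∀ q m (h : q ≤ m) (y : {γ // γ ∈ Γq q} → ℝ) (γ : Γ) (hγq : γ ∈ Γq q)
      (hγm : γ ∈ Γq m), i q m h y ⟨γ, hγm⟩ = y ⟨γ, hγq⟩)
    (hbound : ∀ q m (h : q ≤ m) (y : {γ // γ ∈ Γq q} → ℝ), ‖i q m h y‖ ≤ C * ‖y‖)
    (I : ∀ q, ({γ // γ ∈ Γq q} → ℝ) →ₗ[ℝ] lp (fun _ : Γ => ℝ) ⊤)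
    (hI : ∀ q m (h : q ≤ m) (y : {γ // γ ∈ Γq q} → ℝ) (γ : Γ) (hγ : γ ∈ Γq m),
      (I q y : ∀ _ : Γ, ℝ) γ = i q m h y ⟨γ, hγ⟩) :
    (∀ p q (_ : p ≤ q) (x : lp (fun _ : Γ => ℝ) ⊤),
      ‖I q (fun γ : {γ // γ ∈ Γq q} => x γ) - I p (fun γ : {γ // γ ∈ Γq p} => x γ)‖
        ≤ 2 * C * ‖x‖) ∧
    (∀ x ∈ closure (⋃ q, Set.range (I q)),
      Filter.Tendsto (fun q => I q (fun γ : {γ // γ ∈ Γq q} => x γ))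
        Filter.atTop (nhds x)) ∧
    (∀ x ∈ closure (⋃ q, Set.range (I q)), ∀ q : ℕ,
      (I (q + 1) (fun γ : {γ // γ ∈ Γq (q + 1)} => x γ)
          - I q (fun γ : {γ // γ ∈ Γq q} => x γ))
        ∈ (I (q + 1)) ''
          {y : {γ // γ ∈ Γq (q + 1)} → ℝ | ∀ γ : {γ // γ ∈ Γq (q + 1)}, (γ : Γ) ∈ Γq q → y γ = 0}) :=
  stmt_12_general Γ Γq hmono hcover C hC i hcomp hext hbound I hI
end

section
/- Fix n ≥ 1 and b_1,...,b_n ∈ (0,1). For every f ∈ W[(A_n, b̄)] there exists g ∈ W[(A_n, b̄)] such that |f(m)| ≤ g(m) for all m ∈ ℕ and g admits a tree analysis in which every non-maximal node has at least two nonzero immediate successors (i.e., g is a proper functional). Consequently, the set W_pr of proper functionals 1-norms T(A_n, b̄): for every x, ‖x‖_{T(A_n,b̄)} = sup { g(x) : g ∈ W_pr }. -/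
/-- The proper functionals: those admitting a tree analysis in which every non-maximal
node has at least two (nonzero) immediate successors. -/
inductive IsWpr (n : ℕ) (b : Fin n → ℝ) : (ℕ →₀ ℝ) → Prop
  | unit (k : ℕ) (ε : ℝ) (hε : ε = 1 ∨ ε = -1) : IsWpr n b (Finsupp.single k ε)
  | combine (a : ℕ) (ha : 2 ≤ a) (han : a ≤ n) (f : Fin a → (ℕ →₀ ℝ))
      (hf : ∀ i, IsWpr n b (f i))
      (hsucc : ∀ i j : Fin a, i < j → ∀ p ∈ (f i).support, ∀ q ∈ (f j).support, p < q) :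
      IsWpr n b (∑ i : Fin a, b (Fin.castLE han i) • f i)

/-!
Going down a tree analysis of `f`, every node with a single successor can be deleted:
since `0 < b_i ≤ 1`, removing the factor `b_i` only increases absolute values. Replacing moreover
each leaf `±e_k*` by `s_k e_k*` for a prescribed sign pattern `s`, one gets a proper `g` with
`|f(m)| ≤ s_m g(m)` and `supp g ⊆ supp f`, so the successive structure survives. Taking `s = 1`
gives the domination; taking `s_m` the sign of `x(m)` gives `f(x) ≤ g(x)`, whence the two suprema
agree.
-/

open Finset

def Successive {a : ℕ} (f : Fin a → ℕ →₀ ℝ) : Prop :=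
  ∀ i j : Fin a, i < j → ∀ p ∈ (f i).support, ∀ q ∈ (f j).support, p < q

namespace Successive

variable {a : ℕ} {f : Fin a → ℕ →₀ ℝ}

theorem mono (hf : Successive f) {g : Fin a → ℕ →₀ ℝ}
    (hgf : ∀ i, (g i).support ⊆ (f i).support) : Successive g :=
  fun i j hij p hp q hq => hf i j hij p (hgf i hp) q (hgf j hq)

theorem sum_smul_apply (hf : Successive f) (c : Fin a → ℝ) {i : Fin a} {m : ℕ}
    (hm : m ∈ (f i).support) : (∑ j, c j • f j) m = c i * f i m := by
  rw [Finsupp.finsetSum_apply, Finset.sum_eq_single_of_mem i (mem_univ i)]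
  · rfl
  intro j _ hji
  have hmj : m ∉ (f j).support := fun hmj => by
    rcases hji.lt_or_gt with h | h
    · exact lt_irrefl m (hf j i h m hmj m hm)
    · exact lt_irrefl m (hf i j h m hm m hmj)
  rw [Finsupp.smul_apply, Finsupp.notMem_support_iff.1 hmj, smul_zero]

theorem support_sum_smul_subset (hf : Successive f) {c : Fin a → ℝ} (hc : ∀ i, c i ≠ 0)
    {g : Fin a → ℕ →₀ ℝ} (hgf : ∀ i, (g i).support ⊆ (f i).support) :
    (∑ i, c i • g i).support ⊆ (∑ i, c i • f i).support := by
  intro m hm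
  rw [Finsupp.mem_support_iff, Finsupp.finsetSum_apply] at hm
  obtain ⟨i, -, hi⟩ := Finset.exists_ne_zero_of_sum_ne_zero hm
  have hmi : m ∈ (f i).support :=
    hgf i (Finsupp.mem_support_iff.2 fun h => hi (by rw [Finsupp.smul_apply, h, smul_zero]))
  rw [Finsupp.mem_support_iff, hf.sum_smul_apply c hmi]
  exact mul_ne_zero (hc i) (Finsupp.mem_support_iff.1 hmi)

end Successive

variable {n : ℕ} {b : Fin n → ℝ}

theorem IsWpr.isW {g : ℕ →₀ ℝ} (hg : IsWpr n b g) : IsW n b g := by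
  induction hg with
  | unit k ε hε => exact IsW.unit k ε hε
  | combine a ha han f _ hsucc ih => exact IsW.combine a (by omega) han f ih hsucc

theorem IsW.exists_isWpr_abs_le_mul (hb0 : ∀ i, 0 < b i) (hb1 : ∀ i, b i ≤ 1) {s : ℕ → ℝ}
    (hs : ∀ m, s m = 1 ∨ s m = -1) {f : ℕ →₀ ℝ} (hf : IsW n b f) :
    ∃ g, IsWpr n b g ∧ g.support ⊆ f.support ∧ ∀ m, |f m| ≤ s m * g m := by
  induction hf with
  | unit k ε hε =>
    refine ⟨Finsupp.single k (s k), IsWpr.unit k (s k) (hs k), ?_, fun m => ?_⟩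
    · have hε0 : ε ≠ 0 := by rcases hε with rfl | rfl <;> norm_num
      rw [Finsupp.support_single k hε0]
      exact Finsupp.support_single_subset
    · rcases eq_or_ne k m with rfl | hkm
      · rcases hε with rfl | rfl <;> rcases hs k with h | h <;> simp [h]
      · simp [hkm]
  | combine a ha han f _ hsucc ih =>
    choose g hg hgf hfg using ih
    rcases ha.eq_or_lt with rfl | ha
    · -- a single successor: delete the node
      refine ⟨g 0, hg 0, ?_, fun m => ?_⟩
      · rw [Fin.sum_univ_one, Finsupp.support_smul_eq (hb0 _).ne']
        exact hgf 0
      · rw [Fin.sum_univ_one, Finsupp.smul_apply, smul_eq_mul, abs_mul, abs_of_pos (hb0 _)]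
        exact (mul_le_of_le_one_left (abs_nonneg _) (hb1 _)).trans (hfg 0 m)
    · have hsucc : Successive f := hsucc
      refine ⟨∑ i, b (Fin.castLE han i) • g i, IsWpr.combine a ha han g hg (hsucc.mono hgf),
        hsucc.support_sum_smul_subset (fun i => (hb0 _).ne') hgf, fun m => ?_⟩
      simp only [Finsupp.finsetSum_apply, Finsupp.smul_apply, smul_eq_mul, Finset.mul_sum]
      refine (abs_sum_le_sum_abs _ _).trans (sum_le_sum fun i _ => ?_)
      rw [abs_mul, abs_of_pos (hb0 _), mul_left_comm]
      exact mul_le_mul_of_nonneg_left (hfg i m) (hb0 _).le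

theorem exists_sign_mul_abs_eq (x : ℕ → ℝ) :
    ∃ s : ℕ → ℝ, (∀ m, s m = 1 ∨ s m = -1) ∧ ∀ m, s m * |x m| = x m :=
  ⟨fun m => if x m < 0 then -1 else 1, fun m => by dsimp only; split_ifs <;> simp, fun m => by
    dsimp only
    split_ifs with h
    · rw [abs_of_neg h]; ring
    · rw [abs_of_nonneg (not_lt.1 h), one_mul]⟩

theorem sum_mul_le_of_abs_le_mul {f g x : ℕ →₀ ℝ} {s : ℕ → ℝ} (hfg : ∀ m, |f m| ≤ s m * g m)
    (hs : ∀ m, s m * |x m| = x m) :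
    (f.sum fun k c => c * x k) ≤ g.sum fun k c => c * x k := by
  rw [Finsupp.sum_of_support_subset f subset_union_left (fun k c => c * x k) (fun _ _ => zero_mul _),
    Finsupp.sum_of_support_subset g subset_union_right (fun k c => c * x k) (fun _ _ => zero_mul _)]
  refine sum_le_sum fun m _ => ?_
  calc f m * x m ≤ |f m| * |x m| := (le_abs_self _).trans (abs_mul _ _).le
    _ ≤ s m * g m * |x m| := mul_le_mul_of_nonneg_right (hfg m) (abs_nonneg _)
    _ = g m * x m := by rw [mul_right_comm, hs m, mul_comm]

theorem stmt_14_general (n : ℕ) (b : Fin n → ℝ) (hb : ∀ i, 0 < b i ∧ b i < 1) :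
    (∀ f : ℕ →₀ ℝ, IsW n b f → ∃ g : ℕ →₀ ℝ, IsWpr n b g ∧ ∀ m : ℕ, |f m| ≤ g m) ∧
    (∀ x : ℕ →₀ ℝ,
      tnorm n b x = sSup {y | ∃ g : ℕ →₀ ℝ, IsWpr n b g ∧ y = g.sum fun k c => c * x k}) := by
  have hb0 : ∀ i, 0 < b i := fun i => (hb i).1
  have hb1 : ∀ i, b i ≤ 1 := fun i => (hb i).2.le
  refine ⟨fun f hf => ?_, fun x => ?_⟩
  · obtain ⟨g, hg, -, hfg⟩ := hf.exists_isWpr_abs_le_mul hb0 hb1 (s := 1) fun _ => Or.inl rfl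
    exact ⟨g, hg, fun m => by simpa using hfg m⟩
  · obtain ⟨s, hs, hsx⟩ := exists_sign_mul_abs_eq x
    refine csSup_eq_csSup_of_forall_exists_le ?_ ?_
    · rintro _ ⟨f, hf, rfl⟩
      obtain ⟨g, hg, -, hfg⟩ := hf.exists_isWpr_abs_le_mul hb0 hb1 hs
      exact ⟨_, ⟨g, hg, rfl⟩, sum_mul_le_of_abs_le_mul hfg hsx⟩
    · rintro _ ⟨g, hg, rfl⟩
      exact ⟨_, ⟨g, hg.isW, rfl⟩, le_rfl⟩

/-- every `f ∈ W[(𝒜_n, b̄)]` is pointwise dominated in absolute value by a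
proper functional `g`, and consequently the proper functionals `1`-norm `T(𝒜_n, b̄)`. -/
theorem stmt_14 (n : ℕ) (hn : 1 ≤ n) (b : Fin n → ℝ) (hb : ∀ i, 0 < b i ∧ b i < 1) :
    (∀ f : ℕ →₀ ℝ, IsW n b f → ∃ g : ℕ →₀ ℝ, IsWpr n b g ∧ ∀ m : ℕ, |f m| ≤ g m) ∧
    (∀ x : ℕ →₀ ℝ,
      tnorm n b x = sSup {y | ∃ g : ℕ →₀ ℝ, IsWpr n b g ∧ y = g.sum fun k c => c * x k}) :=
  stmt_14_general n b hb
end
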